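/- Define K_{Sp(2n)}(x,y) := s_{2n+1}(x−y) − s_{2n−1}(x+y), where s_m(t) := sin(πmt)/sin(πt) (extended by continuity, with s_m(0) = m). There is an absolute constant C > 0 such that for every integer n ≥ 1 and every interval I ⊆ [0, 1/2]: (i) | ∫_I K_{Sp(2n)}(x,x) dx − 2n·|I| | ≤ C, and (ii) ∫_{[0,1/2]∖I} ∫_I K_{Sp(2n)}(x,y)² dx dy ≤ C·log(2 + 2n·|I|). -/

import Mathlib

/-!
On the diagonal `K(x,x) = 2n - 2 ∑_{0<k<n} cos(4πkx)`, so (i) amounts to the uniform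
boundedness of the partial sums `∑_{k≤N} sin(kθ)/k`: the terms with `k ≤ 1/θ` contribute at
most `1`, and summation by parts against `|∑ sin(kθ)| ≤ 1/|sin(θ/2)|` bounds the rest by `2π`.

For (ii), `s_m(t)²` is dominated on `|t| ≤ 1/2` by the Lorentzian `2m²/(1 + (2mt)²)`, and
`s_m(t - 1)² = s_m(t)²`, so `K(x,y)²` is dominated by Lorentzians in `x - y`, `x + y` and
`x + y - 1`. The Lorentzian has the second primitive `t ↦ A(2mt)/2` with `A(v) = ∫₀^v arctan`, so
its integral over a rectangle `[a,b] × [α,β]` whose sides do not overlap is a second difference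
of `A` with one step `2m(b - a)`. Since `A` is even, superadditive on `[0,∞)` and has slope below
`π/2`, such a second difference is at most `1 + log(1 + 2m(b - a))`.
-/

open Real MeasureTheory

/-- `sKer m t = sin (π m t) / sin (π t)`, extended by continuity where `sin (π t) = 0`
(at an integer `t = k` the continuous extension has value `m·cos(πmk)/cos(πk)`, which equals
`m·cos(πmt)·cos(πt)` there; in particular `sKer m 0 = m`). -/
noncomputable def sKer (m : ℕ) (t : ℝ) : ℝ :=
  if Real.sin (π * t) = 0 then (m : ℝ) * Real.cos (π * m * t) * Real.cos (π * t)
  else Real.sin (π * m * t) / Real.sin (π * t)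

/-- The determinantal kernel of the nontrivial eigenangles of a Haar-random matrix in the
compact symplectic group `Sp(2n)`: `K_{Sp(2n)}(x,y) = s_{2n+1}(x−y) − s_{2n−1}(x+y)`. -/
noncomputable def KSp (n : ℕ) (x y : ℝ) : ℝ :=
  sKer (2 * n + 1) (x - y) - sKer (2 * n - 1) (x + y)

open Finset

theorem sin_two_mul_add_one_mul (N : ℕ) (u : ℝ) :
    sin ((2 * N + 1) * u) = sin u * (1 + 2 * ∑ k ∈ range N, cos ((k + 1) * (2 * u))) := by
  set f : ℕ → ℝ := fun k => sin ((2 * k + 1) * u)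
  have step : ∀ k : ℕ, 2 * sin u * cos ((k + 1) * (2 * u)) = f (k + 1) - f k := by
    intro k
    rw [two_mul_sin_mul_cos, show u - (k + 1) * (2 * u) = -((2 * k + 1) * u) by ring, sin_neg]
    simp only [f]; push_cast; ring_nf
  calc sin ((2 * N + 1) * u) = sin u + ∑ k ∈ range N, (f (k + 1) - f k) := by
        rw [sum_range_sub]; simp [f]
    _ = _ := by
        rw [mul_add, mul_one, mul_sum, mul_sum]
        congr 1
        refine sum_congr rfl fun k _ => ?_
        rw [← step]; ring

theorem sKer_two_mul_add_one (N : ℕ) (t : ℝ) :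
    sKer (2 * N + 1) t = 1 + 2 * ∑ k ∈ range N, cos ((k + 1) * (2 * π * t)) := by
  unfold sKer
  split_ifs with h
  · obtain ⟨j, hj⟩ := sin_eq_zero_iff.mp h
    have ht : t = j := by
      have := pi_pos; apply mul_left_cancel₀ pi_ne_zero; linarith
    subst ht
    have hcos : ∀ k : ℕ, cos ((k + 1) * (2 * π * j)) = 1 := fun k => by
      rw [show (k + 1) * (2 * π * j) = ((k + 1 : ℕ) * j : ℤ) * (2 * π) by push_cast; ring,
        cos_int_mul_two_pi]
    have hodd : cos (π * ((2 * N + 1 : ℕ) : ℝ) * j) = cos (π * j) := by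
      rw [show π * ((2 * N + 1 : ℕ) : ℝ) * j = π * j + (N * j : ℤ) * (2 * π) by push_cast; ring,
        cos_add_int_mul_two_pi]
    have hsq : cos (π * j) ^ 2 = 1 := by
      rw [cos_sq', mul_comm, sin_int_mul_pi]; norm_num
    simp only [hcos, hodd, sum_const, card_range, nsmul_eq_mul, mul_one]
    push_cast
    linear_combination (2 * (N : ℝ) + 1) * hsq
  · rw [div_eq_iff h, show π * ((2 * N + 1 : ℕ) : ℝ) * t = (2 * N + 1) * (π * t) by push_cast; ring,
      sin_two_mul_add_one_mul, show 2 * π * t = 2 * (π * t) by ring]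
    ring

theorem KSp_self (n : ℕ) (hn : 1 ≤ n) (x : ℝ) :
    KSp n x x = 2 * n - 2 * ∑ k ∈ range (n - 1), cos ((k + 1) * (4 * π * x)) := by
  obtain ⟨N, rfl⟩ := Nat.exists_eq_add_of_le' hn
  rw [KSp, sub_self, show 2 * (N + 1) - 1 = 2 * N + 1 by omega, sKer_two_mul_add_one N,
    show 2 * π * (x + x) = 4 * π * x by ring]
  simp only [sKer, mul_zero, sin_zero, ↓reduceIte, cos_zero, mul_one, add_tsub_cancel_right]
  push_cast
  ring

theorem abs_sin_half_mul_abs_sum_sin_le (θ : ℝ) (N : ℕ) :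
    |sin (θ / 2)| * |∑ k ∈ range N, sin ((k + 1) * θ)| ≤ 1 := by
  set f : ℕ → ℝ := fun k => -cos ((2 * k + 1) * (θ / 2))
  have step : ∀ k : ℕ, 2 * sin (θ / 2) * sin ((k + 1) * θ) = f (k + 1) - f k := by
    intro k
    rw [two_mul_sin_mul_sin, show θ / 2 - (k + 1) * θ = -((2 * k + 1) * (θ / 2)) by ring, cos_neg]
    simp only [f]; push_cast; ring_nf
  have htel : 2 * sin (θ / 2) * ∑ k ∈ range N, sin ((k + 1) * θ) = f N - f 0 := by
    rw [mul_sum, sum_congr rfl fun k _ => step k, sum_range_sub]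
  have hbound : |f N - f 0| ≤ 2 := (abs_sub _ _).trans <| by
    simp only [f, abs_neg]
    linarith [abs_cos_le_one ((2 * N + 1) * (θ / 2)), abs_cos_le_one ((2 * (0 : ℕ) + 1) * (θ / 2))]
  rw [← htel, abs_mul, abs_mul, abs_two] at hbound
  linarith

theorem abs_sum_Ico_mul_le_of_antitone {f z : ℕ → ℝ} {B : ℝ} (hf : Antitone f)
    (hf0 : ∀ i, 0 ≤ f i) (hz : ∀ K, |∑ i ∈ range K, z i| ≤ B) (m n : ℕ) :
    |∑ i ∈ Ico m n, f i * z i| ≤ 2 * B * f m := by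
  set S : ℕ → ℝ := fun K => ∑ i ∈ range K, z i
  rcases lt_or_ge n m with hnm | hmn
  · rw [Ico_eq_empty_of_le hnm.le, sum_empty, abs_zero]
    have := (abs_nonneg _).trans (hz 0)
    have := hf0 m
    positivity
  have key : |∑ i ∈ Ico m n, f i * z i + f m * S m - f n * S n| ≤ B * (f m - f n) := by
    induction n, hmn using Nat.le_induction with
    | base => simp
    | succ n hmn ih =>
      have hS : S (n + 1) = S n + z n := sum_range_succ z n
      have hstep : |(f n - f (n + 1)) * S (n + 1)| ≤ B * (f n - f (n + 1)) := by
        rw [abs_mul, abs_of_nonneg (sub_nonneg.2 (hf n.le_succ)), mul_comm]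
        exact mul_le_mul_of_nonneg_right (hz _) (sub_nonneg.2 (hf n.le_succ))
      calc _ = |(∑ i ∈ Ico m n, f i * z i + f m * S m - f n * S n)
              + (f n - f (n + 1)) * S (n + 1)| := by
            rw [sum_Ico_succ_top hmn, hS]; ring_nf
        _ ≤ B * (f m - f n) + B * (f n - f (n + 1)) := (abs_add_le _ _).trans (add_le_add ih hstep)
        _ = B * (f m - f (n + 1)) := by ring
  have hm : |f m * S m| ≤ B * f m := by
    rw [abs_mul, abs_of_nonneg (hf0 m), mul_comm]; exact mul_le_mul_of_nonneg_right (hz m) (hf0 m)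
  have hn : |f n * S n| ≤ B * f n := by
    rw [abs_mul, abs_of_nonneg (hf0 n), mul_comm]; exact mul_le_mul_of_nonneg_right (hz n) (hf0 n)
  calc |∑ i ∈ Ico m n, f i * z i|
      = |(∑ i ∈ Ico m n, f i * z i + f m * S m - f n * S n) - f m * S m + f n * S n| := by ring_nf
    _ ≤ B * (f m - f n) + B * f m + B * f n := by
        linarith [abs_add_le ((∑ i ∈ Ico m n, f i * z i + f m * S m - f n * S n) - f m * S m)
          (f n * S n), abs_sub ((∑ i ∈ Ico m n, f i * z i + f m * S m - f n * S n)) (f m * S m)]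
    _ = 2 * B * f m := by ring

noncomputable def sinSum (N : ℕ) (θ : ℝ) : ℝ := ∑ k ∈ range N, sin ((k + 1) * θ) / (k + 1)

theorem hasDerivAt_sinSum (N : ℕ) (θ : ℝ) :
    HasDerivAt (sinSum N) (∑ k ∈ range N, cos ((k + 1) * θ)) θ := by
  refine HasDerivAt.fun_sum fun k _ => ?_
  have hk : ((k : ℝ) + 1) ≠ 0 := by positivity
  refine (((hasDerivAt_id θ).const_mul ((k : ℝ) + 1)).sin.div_const ((k : ℝ) + 1)).congr_deriv ?_
  simp only [id, mul_one]
  field_simp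

theorem sinSum_periodic (N : ℕ) : Function.Periodic (sinSum N) (2 * π) := fun θ => by
  refine sum_congr rfl fun k _ => ?_
  rw [mul_add, show ((k : ℝ) + 1) * (2 * π) = (k + 1 : ℕ) * (2 * π) by push_cast; ring,
    sin_add_nat_mul_two_pi]

theorem sinSum_neg (N : ℕ) (θ : ℝ) : sinSum N (-θ) = -sinSum N θ := by
  simp only [sinSum, mul_neg, sin_neg, neg_div, sum_neg_distrib]

theorem div_pi_le_sin_half {θ : ℝ} (h0 : 0 ≤ θ) (hπ : θ ≤ π) : θ / π ≤ sin (θ / 2) := by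
  have := mul_le_sin (x := θ / 2) (by linarith) (by linarith)
  calc θ / π = 2 / π * (θ / 2) := by field_simp
    _ ≤ _ := this

theorem abs_sinSum_le_of_pos {θ : ℝ} (h0 : 0 < θ) (hπ : θ ≤ π) (N : ℕ) :
    |sinSum N θ| ≤ 1 + 2 * π := by
  set M := ⌊1 / θ⌋₊
  have hMθ : (M : ℝ) * θ ≤ 1 := (le_div_iff₀ h0).1 (Nat.floor_le (by positivity))
  have hMθ' : 1 ≤ ((M : ℝ) + 1) * θ := ((div_lt_iff₀ h0).1 (Nat.lt_floor_add_one _)).le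
  have head : ∀ K ≤ M, |∑ k ∈ range K, sin ((k + 1) * θ) / (k + 1)| ≤ 1 := by
    intro K hK
    calc |∑ k ∈ range K, sin ((k + 1) * θ) / (k + 1)|
        ≤ ∑ k ∈ range K, |sin ((k + 1) * θ) / (k + 1)| := abs_sum_le_sum_abs _ _
      _ ≤ ∑ _k ∈ range K, θ := sum_le_sum fun k _ => by
          rw [abs_div, abs_of_pos (by positivity : (0 : ℝ) < k + 1), div_le_iff₀ (by positivity)]
          calc |sin ((k + 1) * θ)| ≤ |(k + 1) * θ| := abs_sin_le_abs
            _ = θ * (k + 1) := by rw [abs_of_pos (by positivity)]; ring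
      _ = K * θ := by simp
      _ ≤ M * θ := by gcongr
      _ ≤ 1 := hMθ
  have hsin : θ / π ≤ sin (θ / 2) := div_pi_le_sin_half h0.le hπ
  have hsin0 : 0 < sin (θ / 2) := lt_of_lt_of_le (by positivity) hsin
  have tail : |∑ k ∈ Ico M N, sin ((k + 1) * θ) / (k + 1)| ≤ 2 * π := by
    have habel := abs_sum_Ico_mul_le_of_antitone (f := fun k : ℕ => 1 / ((k : ℝ) + 1))
      (z := fun k => sin ((k + 1) * θ)) (B := 1 / sin (θ / 2))
      (fun i j hij => one_div_le_one_div_of_le (by positivity) (by gcongr)) (fun i => by positivity)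
      (fun K => by
        rw [le_div_iff₀ hsin0, mul_comm, ← abs_of_pos hsin0]
        exact abs_sin_half_mul_abs_sum_sin_le θ K) M N
    simp only [one_div_mul_eq_div] at habel
    have hprod : 1 / π ≤ sin (θ / 2) * (M + 1) := calc
      1 / π ≤ θ / π * (M + 1) := by
        rw [div_mul_eq_mul_div, mul_comm θ]; exact div_le_div_of_nonneg_right hMθ' pi_pos.le
      _ ≤ sin (θ / 2) * (M + 1) := by gcongr
    calc _ ≤ 2 * (1 / sin (θ / 2)) * (1 / ((M : ℝ) + 1)) := habel
      _ = 2 / (sin (θ / 2) * (M + 1)) := by field_simp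
      _ ≤ 2 / (1 / π) := by gcongr
      _ = 2 * π := by field_simp
  rcases le_total N M with hNM | hMN
  · exact (head N hNM).trans (by linarith [pi_pos])
  · rw [sinSum, ← sum_range_add_sum_Ico _ hMN]
    exact (abs_add_le _ _).trans (add_le_add (head M le_rfl) tail)

theorem abs_sinSum_le (N : ℕ) (θ : ℝ) : |sinSum N θ| ≤ 1 + 2 * π := by
  obtain ⟨y, ⟨hy₁, hy₂⟩, hy⟩ := (sinSum_periodic N).exists_mem_Ioc (by positivity) θ (-π)
  rw [hy]
  rcases lt_trichotomy y 0 with hneg | rfl | hpos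
  · rw [← abs_neg, ← sinSum_neg]
    exact abs_sinSum_le_of_pos (by linarith) (by linarith) N
  · rw [show sinSum N 0 = 0 by simp [sinSum], abs_zero]
    positivity
  · exact abs_sinSum_le_of_pos hpos (by linarith) N

theorem integral_KSp_self (n : ℕ) (hn : 1 ≤ n) (a b : ℝ) :
    ∫ x in a..b, KSp n x x
      = 2 * n * (b - a) - (sinSum (n - 1) (4 * π * b) - sinSum (n - 1) (4 * π * a)) / (2 * π) := by
  have hderiv : ∀ x, HasDerivAt (fun x => 2 * n * x - sinSum (n - 1) (4 * π * x) / (2 * π))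
      (KSp n x x) x := by
    intro x
    rw [KSp_self n hn]
    refine (((hasDerivAt_id x).const_mul (2 * (n : ℝ))).sub
      (((hasDerivAt_sinSum (n - 1) _).comp x ((hasDerivAt_id x).const_mul (4 * π))).div_const
        (2 * π))).congr_deriv ?_
    simp only [id, mul_one]
    rw [mul_div_assoc, show 4 * π / (2 * π) = 2 by field_simp; norm_num]
    ring
  rw [intervalIntegral.integral_eq_sub_of_hasDerivAt (fun x _ => hderiv x)]
  · ring
  · simp_rw [KSp_self n hn]
    exact Continuous.intervalIntegrable (by fun_prop) a b

theorem abs_integral_KSp_self_sub_le (n : ℕ) (hn : 1 ≤ n) (a b : ℝ) :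
    |(∫ x in a..b, KSp n x x) - 2 * n * (b - a)| ≤ (1 + 2 * π) / π := by
  rw [integral_KSp_self n hn, sub_sub_cancel_left, abs_neg, abs_div,
    abs_of_pos (by positivity : (0 : ℝ) < 2 * π),
    div_le_div_iff₀ (by positivity) pi_pos]
  have := (abs_sub _ _).trans (add_le_add (abs_sinSum_le (n - 1) (4 * π * b))
    (abs_sinSum_le (n - 1) (4 * π * a)))
  nlinarith [pi_pos]

theorem abs_sin_nat_mul_le (m : ℕ) (u : ℝ) : |sin (m * u)| ≤ m * |sin u| := by
  induction m with
  | zero => simp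
  | succ m ih =>
    rw [Nat.cast_succ, add_mul, one_mul, sin_add]
    calc |sin (m * u) * cos u + cos (m * u) * sin u|
        ≤ |sin (m * u)| * |cos u| + |cos (m * u)| * |sin u| := by
          rw [← abs_mul, ← abs_mul]; exact abs_add_le _ _
      _ ≤ |sin (m * u)| * 1 + 1 * |sin u| := by
          gcongr
          exacts [abs_cos_le_one u, abs_cos_le_one _]
      _ ≤ (m + 1) * |sin u| := by linarith

theorem abs_sKer_le (m : ℕ) (t : ℝ) : |sKer m t| ≤ m := by
  unfold sKer
  split_ifs with h
  · rw [abs_mul, abs_mul, Nat.abs_cast]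
    calc (m : ℝ) * |cos (π * m * t)| * |cos (π * t)| ≤ m * 1 * 1 := by
          gcongr <;> exact abs_cos_le_one _
      _ = m := by ring
  · rw [abs_div, div_le_iff₀ (abs_pos.2 h), show π * m * t = m * (π * t) by ring]
    exact abs_sin_nat_mul_le m (π * t)

theorem two_mul_abs_le_abs_sin_pi_mul {t : ℝ} (ht : |t| ≤ 1 / 2) : 2 * |t| ≤ |sin (π * t)| := by
  wlog h0 : 0 ≤ t generalizing t
  · simpa [mul_neg, sin_neg, abs_neg] using this (t := -t) (by rwa [abs_neg]) (by linarith)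
  rw [abs_of_nonneg h0] at ht ⊢
  have hs := mul_le_sin (x := π * t) (by positivity) (by nlinarith [pi_pos])
  rw [abs_of_nonneg ((mul_nonneg (by positivity) (by positivity)).trans hs)]
  calc 2 * t = 2 / π * (π * t) := by field_simp
    _ ≤ _ := hs

noncomputable def lorentzian (m t : ℝ) : ℝ := 2 * m ^ 2 / (1 + (2 * m * t) ^ 2)

@[fun_prop]
theorem continuous_lorentzian (m : ℝ) : Continuous (lorentzian m) :=
  continuous_const.div (by fun_prop) fun t => by positivity

-- `s_m(t)² ≤ min(m², 1/(4t²))`, and `min(A, B) ≤ 2AB/(A + B)`.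
theorem sKer_sq_le_lorentzian (m : ℕ) {t : ℝ} (ht : |t| ≤ 1 / 2) :
    sKer m t ^ 2 ≤ lorentzian m t := by
  have hm : sKer m t ^ 2 ≤ (m : ℝ) ^ 2 := sq_le_sq.2 ((abs_sKer_le m t).trans (le_abs_self _))
  have hjordan := two_mul_abs_le_abs_sin_pi_mul ht
  have ht2 : 4 * t ^ 2 * sKer m t ^ 2 ≤ 1 := by
    by_cases h : sin (π * t) = 0
    · have : t = 0 := abs_eq_zero.1 (by rw [h, abs_zero] at hjordan; linarith [abs_nonneg t])
      simp [this]
    · have hsq : 4 * t ^ 2 ≤ sin (π * t) ^ 2 := by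
        nlinarith [sq_abs t, sq_abs (sin (π * t)), abs_nonneg t]
      calc 4 * t ^ 2 * sKer m t ^ 2 ≤ sin (π * t) ^ 2 * sKer m t ^ 2 := by gcongr
        _ = sin (π * m * t) ^ 2 := by rw [sKer, if_neg h]; field_simp
        _ ≤ 1 := sin_sq_le_one _
  rw [lorentzian, le_div_iff₀ (by positivity)]
  nlinarith

theorem sKer_sub_one_sq (m : ℕ) (t : ℝ) : sKer m (t - 1) ^ 2 = sKer m t ^ 2 := by
  have hA : π * m * (t - 1) = π * m * t - m * π := by ring
  have hB : π * (t - 1) = π * t - π := by ring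
  have hsq : cos (m * π) ^ 2 = 1 := by rw [cos_sq', sin_nat_mul_pi]; norm_num
  unfold sKer
  rw [hA, hB, sin_sub_pi, cos_sub_pi, sin_sub, cos_sub, sin_nat_mul_pi]
  simp only [neg_eq_zero, mul_zero, sub_zero, add_zero]
  split_ifs
  · linear_combination ((m : ℝ) * cos (π * m * t) * cos (π * t)) ^ 2 * hsq
  · rw [div_pow, div_pow, neg_sq]
    linear_combination sin (π * m * t) ^ 2 / sin (π * t) ^ 2 * hsq

theorem sKer_sq_le_lorentzian_add (m : ℕ) {t : ℝ} (h0 : 0 ≤ t) (h1 : t ≤ 1) :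
    sKer m t ^ 2 ≤ lorentzian m t + lorentzian m (t - 1) := by
  have hnn : ∀ s, 0 ≤ lorentzian m s := fun s => by unfold lorentzian; positivity
  rcases le_total t (1 / 2) with ht | ht
  · linarith [sKer_sq_le_lorentzian m (t := t) (by rw [abs_of_nonneg h0]; exact ht), hnn (t - 1)]
  · rw [← sKer_sub_one_sq]
    linarith [sKer_sq_le_lorentzian m (t := t - 1) (by rw [abs_of_nonpos (by linarith)]; linarith),
      hnn t]

theorem KSp_sq_le (n : ℕ) {x y : ℝ} (hx : x ∈ Set.Icc (0 : ℝ) (1 / 2))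
    (hy : y ∈ Set.Icc (0 : ℝ) (1 / 2)) :
    KSp n x y ^ 2 ≤ 2 * lorentzian (2 * n + 1) (x - y)
      + 2 * lorentzian (2 * n - 1 : ℕ) (x + y) + 2 * lorentzian (2 * n - 1 : ℕ) (x + y - 1) := by
  obtain ⟨hx0, hx1⟩ := hx
  obtain ⟨hy0, hy1⟩ := hy
  have hdiff := sKer_sq_le_lorentzian (2 * n + 1) (t := x - y)
    (by rw [abs_le]; constructor <;> linarith)
  have hsum := sKer_sq_le_lorentzian_add (2 * n - 1) (t := x + y) (by linarith) (by linarith)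
  push_cast at hdiff
  rw [KSp]
  nlinarith [sq_nonneg (sKer (2 * n + 1) (x - y) + sKer (2 * n - 1) (x + y))]

noncomputable def arctanIntegral (v : ℝ) : ℝ := v * arctan v - log (1 + v ^ 2) / 2

theorem hasDerivAt_arctanIntegral (v : ℝ) : HasDerivAt arctanIntegral (arctan v) v := by
  have hv : 1 + v ^ 2 ≠ 0 := by positivity
  refine (((hasDerivAt_id v).mul (hasDerivAt_arctan v)).sub
    ((((hasDerivAt_pow 2 v).const_add 1).log hv).div_const 2)).congr_deriv ?_
  simp only [id]
  field_simp
  ring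

theorem arctanIntegral_neg (v : ℝ) : arctanIntegral (-v) = arctanIntegral v := by
  simp [arctanIntegral, arctan_neg]

theorem arctanIntegral_add_sub_eq (w l : ℝ) :
    arctanIntegral (w + l) - arctanIntegral w = ∫ s in (0 : ℝ)..l, arctan (w + s) := by
  rw [intervalIntegral.integral_comp_add_left, add_zero,
    intervalIntegral.integral_eq_sub_of_hasDerivAt (fun x _ => hasDerivAt_arctanIntegral x)
      (continuous_arctan.intervalIntegrable _ _)]

theorem arctanIntegral_add_sub_le {l : ℝ} (hl : 0 ≤ l) (w : ℝ) :
    arctanIntegral (w + l) - arctanIntegral w ≤ l * (π / 2) := by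
  rw [arctanIntegral_add_sub_eq]
  calc ∫ s in (0 : ℝ)..l, arctan (w + s) ≤ ∫ _ in (0 : ℝ)..l, π / 2 :=
        intervalIntegral.integral_mono_on hl (Continuous.intervalIntegrable (by fun_prop) _ _)
          intervalIntegrable_const fun s _ => (arctan_lt_pi_div_two _).le
    _ = l * (π / 2) := by rw [intervalIntegral.integral_const, smul_eq_mul, sub_zero]

theorem arctanIntegral_le_add_sub {w l : ℝ} (hw : 0 ≤ w) (hl : 0 ≤ l) :
    arctanIntegral l ≤ arctanIntegral (w + l) - arctanIntegral w := by
  have h0 := arctanIntegral_add_sub_eq 0 l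
  rw [zero_add, show arctanIntegral 0 = 0 by simp [arctanIntegral], sub_zero] at h0
  rw [h0, arctanIntegral_add_sub_eq]
  exact intervalIntegral.integral_mono_on hl (Continuous.intervalIntegrable (by fun_prop) _ _)
    (Continuous.intervalIntegrable (by fun_prop) _ _)
    fun s _ => arctan_strictMono.monotone (by linarith)

theorem arctan_le_self {x : ℝ} (hx : 0 ≤ x) : arctan x ≤ x := by
  simpa [tan_arctan] using le_tan (arctan_nonneg.2 hx) (arctan_lt_pi_div_two x)

theorem mul_pi_div_two_sub_arctan_le_one {x : ℝ} (hx : 0 ≤ x) : x * (π / 2 - arctan x) ≤ 1 := by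
  rcases hx.eq_or_lt with rfl | hpos
  · norm_num
  rw [← arctan_inv_of_pos hpos]
  calc x * arctan x⁻¹ ≤ x * x⁻¹ := by gcongr; exact arctan_le_self (by positivity)
    _ = 1 := mul_inv_cancel₀ hpos.ne'

theorem mul_pi_div_two_sub_arctanIntegral_le {l : ℝ} (hl : 0 ≤ l) :
    l * (π / 2) - arctanIntegral l ≤ 1 + log (1 + l) := by
  have hlog : log (1 + l ^ 2) ≤ 2 * log (1 + l) := by
    rw [show 2 * log (1 + l) = log ((1 + l) ^ 2) by rw [log_pow]; norm_num]
    exact log_le_log (by positivity) (by nlinarith)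
  have := mul_pi_div_two_sub_arctan_le_one hl
  rw [arctanIntegral]
  nlinarith

theorem arctanIntegral_sub_sub_add_le {w d l : ℝ} (hd : 0 ≤ d) (hw : 0 ≤ w ∨ w + d + l ≤ 0) :
    arctanIntegral (w + d + l) - arctanIntegral (w + d) - arctanIntegral (w + l)
      + arctanIntegral w ≤ 1 + log (1 + d) := by
  have key : ∀ w l, 0 ≤ w → arctanIntegral (w + d + l) - arctanIntegral (w + d)
      - arctanIntegral (w + l) + arctanIntegral w ≤ 1 + log (1 + d) := by
    intro w l hw
    have h1 := arctanIntegral_add_sub_le hd (w + l)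
    have h2 := arctanIntegral_le_add_sub hw hd
    have h3 := mul_pi_div_two_sub_arctanIntegral_le hd
    rw [show w + l + d = w + d + l by ring] at h1
    linarith
  rcases hw with hw | hw
  · exact key w l hw
  · convert key (-(w + d + l)) l (by linarith) using 1
    rw [show -(w + d + l) + d + l = -w by ring, show -(w + d + l) + d = -(w + l) by ring,
      show -(w + d + l) + l = -(w + d) by ring]
    simp only [arctanIntegral_neg]
    ring

theorem integral_integral_comp_sub {f g G : ℝ → ℝ} (hG : ∀ t, HasDerivAt G (g t) t)
    (hg : ∀ t, HasDerivAt g (f t) t) (hf : Continuous f) (a b α β : ℝ) :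
    ∫ y in α..β, ∫ x in a..b, f (x - y) = G (b - α) - G (b - β) - G (a - α) + G (a - β) := by
  have hgc : Continuous g := continuous_iff_continuousAt.2 fun t => (hg t).continuousAt
  have inner : ∀ y, ∫ x in a..b, f (x - y) = g (b - y) - g (a - y) := fun y => by
    rw [intervalIntegral.integral_comp_sub_right,
      intervalIntegral.integral_eq_sub_of_hasDerivAt (fun t _ => hg t) (hf.intervalIntegrable _ _)]
  simp_rw [inner]
  rw [intervalIntegral.integral_sub (Continuous.intervalIntegrable (by fun_prop) _ _)
      (Continuous.intervalIntegrable (by fun_prop) _ _),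
    intervalIntegral.integral_comp_sub_left g b, intervalIntegral.integral_comp_sub_left g a,
    intervalIntegral.integral_eq_sub_of_hasDerivAt (fun t _ => hG t) (hgc.intervalIntegrable _ _),
    intervalIntegral.integral_eq_sub_of_hasDerivAt (fun t _ => hG t) (hgc.intervalIntegrable _ _)]
  ring

theorem integral_integral_lorentzian_sub_le {m a b α β : ℝ} (hm : 0 ≤ m) (hab : a ≤ b)
    (hsep : β ≤ a ∨ b ≤ α) :
    ∫ y in α..β, ∫ x in a..b, lorentzian m (x - y) ≤ (1 + log (1 + 2 * m * (b - a))) / 2 := by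
  have hG : ∀ t, HasDerivAt (fun t => arctanIntegral (2 * m * t) / 2) (m * arctan (2 * m * t)) t :=
    fun t => (((hasDerivAt_arctanIntegral _).comp t ((hasDerivAt_id t).const_mul (2 * m))).div_const
      2).congr_deriv (by simp only [id]; ring)
  have hg : ∀ t, HasDerivAt (fun t => m * arctan (2 * m * t)) (lorentzian m t) t := fun t =>
    (((hasDerivAt_arctan _).comp t ((hasDerivAt_id t).const_mul (2 * m))).const_mul m).congr_deriv
      (by simp only [id, lorentzian]; field_simp)
  rw [integral_integral_comp_sub hG hg (continuous_lorentzian m)]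
  have hw : 0 ≤ 2 * m * (a - β) ∨ 2 * m * (a - β) + 2 * m * (b - a) + 2 * m * (β - α) ≤ 0 := by
    rcases hsep with h | h
    · exact Or.inl (mul_nonneg (by positivity) (by linarith))
    · exact Or.inr (by nlinarith)
  have h := arctanIntegral_sub_sub_add_le (mul_nonneg (by positivity) (sub_nonneg.2 hab)) hw
  rw [show 2 * m * (a - β) + 2 * m * (b - a) + 2 * m * (β - α) = 2 * m * (b - α) by ring,
    show 2 * m * (a - β) + 2 * m * (b - a) = 2 * m * (b - β) by ring,
    show 2 * m * (a - β) + 2 * m * (β - α) = 2 * m * (a - α) by ring] at h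
  linarith

noncomputable def lorentzianMass (m a b y : ℝ) : ℝ := ∫ x in a..b, lorentzian m (x - y)

@[fun_prop]
theorem continuous_lorentzianMass (m a b : ℝ) : Continuous (lorentzianMass m a b) :=
  intervalIntegral.continuous_parametric_intervalIntegral_of_continuous' (by fun_prop) a b

-- Since `x + y = x - (-y)` and `x + y - 1 = x - (1 - y)`, all three terms of `KSp_sq_le` are
-- masses of the Lorentzian in `x - y'`.
noncomputable def KSpMajorant (n : ℕ) (a b y : ℝ) : ℝ :=
  2 * lorentzianMass (2 * n + 1) a b y + 2 * lorentzianMass (2 * n - 1 : ℕ) a b (-y)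
    + 2 * lorentzianMass (2 * n - 1 : ℕ) a b (1 - y)

theorem integral_Icc_KSp_sq_le_KSpMajorant (n : ℕ) {a b y : ℝ} (ha : 0 ≤ a) (hab : a ≤ b)
    (hb : b ≤ 1 / 2) (hy : y ∈ Set.Icc (0 : ℝ) (1 / 2)) :
    ∫ x in Set.Icc a b, KSp n x y ^ 2 ≤ KSpMajorant n a b y := calc
  ∫ x in Set.Icc a b, KSp n x y ^ 2
      ≤ ∫ x in Set.Icc a b, (2 * lorentzian (2 * n + 1) (x - y)
          + 2 * lorentzian (2 * n - 1 : ℕ) (x + y) + 2 * lorentzian (2 * n - 1 : ℕ) (x + y - 1)) :=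
        integral_mono_of_nonneg (.of_forall fun x => sq_nonneg _)
          (Continuous.integrableOn_Icc (by fun_prop))
          (ae_restrict_of_forall_mem measurableSet_Icc fun x hx =>
            KSp_sq_le n ⟨ha.trans hx.1, hx.2.trans hb⟩ hy)
  _ = KSpMajorant n a b y := by
        rw [integral_Icc_eq_integral_Ioc, ← intervalIntegral.integral_of_le hab,
          intervalIntegral.integral_add (Continuous.intervalIntegrable (by fun_prop) _ _)
            (Continuous.intervalIntegrable (by fun_prop) _ _),
          intervalIntegral.integral_add (Continuous.intervalIntegrable (by fun_prop) _ _)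
            (Continuous.intervalIntegrable (by fun_prop) _ _)]
        simp only [intervalIntegral.integral_const_mul, KSpMajorant, lorentzianMass,
          sub_neg_eq_add, sub_sub_eq_add_sub]

theorem integral_KSpMajorant_le (n : ℕ) {a b α β : ℝ} (ha : 0 ≤ a) (hab : a ≤ b)
    (hb : b ≤ 1 / 2) (hα : 0 ≤ α) (hβ : β ≤ 1 / 2) (hsep : β ≤ a ∨ b ≤ α) :
    ∫ y in α..β, KSpMajorant n a b y ≤ 3 * (1 + log (1 + 2 * (2 * n + 1) * (b - a))) := by
  have hmass : ∀ {m α β : ℝ}, 0 ≤ m → m ≤ 2 * n + 1 → (β ≤ a ∨ b ≤ α) →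
      ∫ y in α..β, lorentzianMass m a b y ≤ (1 + log (1 + 2 * (2 * n + 1) * (b - a))) / 2 := by
    intro m α β hm₀ hm₁ hsep
    refine (integral_integral_lorentzian_sub_le hm₀ hab hsep).trans ?_
    gcongr
  have hm : ((2 * n - 1 : ℕ) : ℝ) ≤ 2 * n + 1 := by
    exact_mod_cast (by omega : 2 * n - 1 ≤ 2 * n + 1)
  have h₁ := hmass (by positivity) le_rfl hsep
  have h₂ := hmass (α := -β) (β := -α) (Nat.cast_nonneg _) hm (Or.inl (by linarith))
  have h₃ := hmass (α := 1 - β) (β := 1 - α) (Nat.cast_nonneg _) hm (Or.inr (by linarith))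
  rw [← intervalIntegral.integral_comp_neg] at h₂
  rw [← intervalIntegral.integral_comp_sub_left] at h₃
  unfold KSpMajorant
  rw [intervalIntegral.integral_add (Continuous.intervalIntegrable (by fun_prop) _ _)
      (Continuous.intervalIntegrable (by fun_prop) _ _),
    intervalIntegral.integral_add (Continuous.intervalIntegrable (by fun_prop) _ _)
      (Continuous.intervalIntegrable (by fun_prop) _ _),
    intervalIntegral.integral_const_mul, intervalIntegral.integral_const_mul,
    intervalIntegral.integral_const_mul]
  linarith

theorem Icc_sdiff_Icc_eq_Ico_union_Ioc {α : Type*} [LinearOrder α] {a b c d : α} (ha : a ≤ d)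
    (hb : c ≤ b) : Set.Icc c d \ Set.Icc a b = Set.Ico c a ∪ Set.Ioc b d := by
  ext y
  simp only [Set.mem_sdiff, Set.mem_Icc, Set.mem_union, Set.mem_Ico, Set.mem_Ioc]
  grind

theorem integral_compl_integral_KSp_sq_le (n : ℕ) {a b : ℝ} (ha : 0 ≤ a) (hab : a ≤ b)
    (hb : b ≤ 1 / 2) :
    ∫ y in Set.Icc (0 : ℝ) (1 / 2) \ Set.Icc a b, ∫ x in Set.Icc a b, KSp n x y ^ 2
      ≤ 6 * (1 + log (1 + 2 * (2 * n + 1) * (b - a))) := by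
  have hE : Continuous (KSpMajorant n a b) := by unfold KSpMajorant; fun_prop
  calc ∫ y in Set.Icc (0 : ℝ) (1 / 2) \ Set.Icc a b, ∫ x in Set.Icc a b, KSp n x y ^ 2
      ≤ ∫ y in Set.Icc (0 : ℝ) (1 / 2) \ Set.Icc a b, KSpMajorant n a b y :=
        integral_mono_of_nonneg (.of_forall fun y => integral_nonneg fun x => sq_nonneg _)
          (hE.integrableOn_Icc.mono_set Set.sdiff_subset)
          (ae_restrict_of_forall_mem (measurableSet_Icc.diff measurableSet_Icc) fun y hy =>
            integral_Icc_KSp_sq_le_KSpMajorant n ha hab hb hy.1)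
    _ = (∫ y in (0 : ℝ)..a, KSpMajorant n a b y) + ∫ y in b..1 / 2, KSpMajorant n a b y := by
        rw [Icc_sdiff_Icc_eq_Ico_union_Ioc (hab.trans hb) (ha.trans hab),
          setIntegral_union (Set.disjoint_left.2 fun y h₁ h₂ => by linarith [h₁.2, h₂.1])
            measurableSet_Ioc (hE.integrableOn_Icc.mono_set Set.Ico_subset_Icc_self)
            (hE.integrableOn_Icc.mono_set Set.Ioc_subset_Icc_self), integral_Ico_eq_integral_Ioo,
          ← integral_Ioc_eq_integral_Ioo, ← intervalIntegral.integral_of_le ha,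
          ← intervalIntegral.integral_of_le hb]
    _ ≤ 3 * (1 + log (1 + 2 * (2 * n + 1) * (b - a)))
          + 3 * (1 + log (1 + 2 * (2 * n + 1) * (b - a))) :=
        add_le_add (integral_KSpMajorant_le n ha hab hb le_rfl (hab.trans hb) (Or.inl le_rfl))
          (integral_KSpMajorant_le n ha hab hb (ha.trans hab) le_rfl (Or.inr le_rfl))
    _ = 6 * (1 + log (1 + 2 * (2 * n + 1) * (b - a))) := by ring

theorem six_mul_one_add_log_le (n : ℕ) {L : ℝ} (hL0 : 0 ≤ L) (hL : L ≤ 1 / 2) :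
    6 * (1 + log (1 + 2 * (2 * n + 1) * L)) ≤ 40 * log (2 + 2 * n * L) := by
  have hnL : 0 ≤ n * L := by positivity
  have hsplit : log (1 + 2 * (2 * n + 1) * L) ≤ log 3 + log (2 + 2 * n * L) := by
    rw [← log_mul (by norm_num) (by positivity)]
    exact log_le_log (by positivity) (by nlinarith)
  have hlog3 : log 3 ≤ 2 := by linarith [log_le_sub_one_of_pos (show (0 : ℝ) < 3 by norm_num)]
  have hlog2 : log 2 ≤ log (2 + 2 * n * L) := log_le_log (by norm_num) (by linarith)
  linarith [log_two_gt_d9]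

/-- **Eigenvalue count estimates for `Sp(2n)`.** There is an absolute constant `C > 0`
such that for every `n ≥ 1` and every interval `I = [a,b] ⊆ [0,1/2]`:
(i)  `|∫_I K_{Sp(2n)}(x,x) dx − 2n·|I|| ≤ C`, and
(ii) `∫_{[0,1/2]∖I} ∫_I K_{Sp(2n)}(x,y)² dx dy ≤ C·log(2 + 2n·|I|)`. -/
theorem Sp_kernel_integrals :
    ∃ C : ℝ, 0 < C ∧ ∀ (n : ℕ), 1 ≤ n → ∀ a b : ℝ,
      0 ≤ a → a ≤ b → b ≤ 1 / 2 →
      |(∫ x in a..b, KSp n x x) - 2 * (n : ℝ) * (b - a)| ≤ C ∧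
      (∫ y in Set.Icc (0 : ℝ) (1 / 2) \ Set.Icc a b, ∫ x in Set.Icc a b, (KSp n x y) ^ 2)
        ≤ C * Real.log (2 + 2 * (n : ℝ) * (b - a)) := by
  refine ⟨40, by norm_num, fun n hn a b ha hab hb => ⟨?_, ?_⟩⟩
  · refine (abs_integral_KSp_self_sub_le n hn a b).trans ?_
    rw [div_le_iff₀ pi_pos]
    linarith [pi_gt_three]
  · exact (integral_compl_integral_KSp_sq_le n ha hab hb).trans
      (six_mul_one_add_log_le n (sub_nonneg.2 hab) (by linarith))
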